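/- arXiv:math/0608478 — 3 statements merged into one kernel-verified Lean document; each statement's English description precedes it below -/
import Mathlib

section
/- Let β ≥ 1 and let μ₃ : [0,T] → ℝ be continuous with μ₃(t) > 0 on (0,T] and such that the limit M = lim_{t→0⁺} μ₃(t)/t^{(β+1)/2} exists and is positive. Let ψ : [0,T] → ℝ be continuous with ψ(t) > 0 on [0,T]. Define H(t) = √π · μ₃(t) / (√(β+1) · t^β · ∫₀ᵗ ψ(τ)/√(t^{β+1} − τ^{β+1}) dτ) for t ∈ (0,T]. Then lim_{t→0⁺} H(t) = √π · M / (√(β+1) · ψ(0) · I₁), where I₁ = ∫₀¹ dz/√(1 − z^{β+1}). -/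
open MeasureTheory Set Real Filter Topology

/-!
After the substitution `τ = t z`, the integral in the denominator becomes
`t ^ (1 - (β + 1) / 2) * ∫₀¹ ψ (t z) / √(1 - z ^ (β + 1)) dz`, so that
`H t = √π (μ₃ t / t ^ ((β + 1) / 2)) / (√(β + 1) ∫₀¹ ψ (t z) / √(1 - z ^ (β + 1)) dz)`.
The weight `1 / √(1 - z ^ (β + 1))` is integrable on `[0, 1]`, being dominated by `(1 - z) ^ (-1/2)`
(as `z ^ (β + 1) ≤ z`),
so dominated convergence sends the remaining integral to `ψ 0 * I₁` as `t → 0⁺`.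
-/

theorem integral_div_sqrt_rpow_sub_rpow {t : ℝ} (ht : 0 < t) (a : ℝ) (f : ℝ → ℝ) :
    ∫ τ in (0:ℝ)..t, f τ / √(t ^ a - τ ^ a)
      = t ^ (1 - a / 2) * ∫ z in (0:ℝ)..1, f (t * z) / √(1 - z ^ a) := by
  have hsqrt : √(t ^ a) = t ^ (a / 2) := by
    rw [sqrt_eq_rpow, ← rpow_mul ht.le, mul_one_div]
  have hscale : ∀ z ∈ uIcc (0:ℝ) 1,
      f (t * z) / √(t ^ a - (t * z) ^ a) = t ^ (-(a / 2)) * (f (t * z) / √(1 - z ^ a)) := by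
    intro z hz
    rw [uIcc_of_le zero_le_one] at hz
    rw [mul_rpow ht.le hz.1, ← mul_one_sub, sqrt_mul (rpow_nonneg ht.le a), hsqrt,
      rpow_neg ht.le, div_mul_eq_div_div_swap, inv_mul_eq_div]
  have hsub := intervalIntegral.integral_comp_mul_left (a := 0) (b := 1)
    (fun τ => f τ / √(t ^ a - τ ^ a)) ht.ne'
  simp only [mul_zero, mul_one, smul_eq_mul] at hsub
  rw [eq_inv_mul_iff_mul_eq₀ ht.ne', intervalIntegral.integral_congr hscale,
    intervalIntegral.integral_const_mul] at hsub
  rw [← hsub, ← mul_assoc, sub_eq_add_neg, rpow_add ht, rpow_one]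

theorem intervalIntegrable_one_div_sqrt_one_sub_rpow {a : ℝ} (ha : 1 ≤ a) :
    IntervalIntegrable (fun z => 1 / √(1 - z ^ a)) volume 0 1 := by
  have hdom : IntervalIntegrable (fun z : ℝ => (1 - z) ^ (-(1 / 2) : ℝ)) volume 0 1 := by
    simpa using ((intervalIntegral.intervalIntegrable_rpow' (a := 0) (b := 1)
      (r := -(1 / 2)) (by norm_num)).comp_sub_left 1).symm
  refine hdom.mono_fun' ?_ ?_
  · exact (by fun_prop : Measurable fun z : ℝ => 1 / √(1 - z ^ a)).aestronglyMeasurable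
  · rw [uIoc_of_le zero_le_one]
    refine (ae_restrict_iff' measurableSet_Ioc).2 (ae_of_all _ fun z hz => ?_)
    dsimp only
    rw [norm_of_nonneg (by positivity), rpow_neg (by linarith [hz.2]), ← sqrt_eq_rpow,
      one_div]
    rcases hz.2.eq_or_lt with rfl | hz1
    · simp -- both sides are junk values `0` at `z = 1`
    · exact inv_anti₀ (sqrt_pos.2 (by linarith)) (sqrt_le_sqrt
        (by linarith [rpow_le_self_of_le_one hz.1.le hz.2 ha]))

theorem integral_one_div_sqrt_one_sub_rpow_pos {a : ℝ} (ha : 1 ≤ a) :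
    0 < ∫ z in (0:ℝ)..1, 1 / √(1 - z ^ a) := by
  refine intervalIntegral.intervalIntegral_pos_of_pos_on
    (intervalIntegrable_one_div_sqrt_one_sub_rpow ha) (fun z hz => ?_) zero_lt_one
  have hza : z ^ a < 1 := (rpow_le_self_of_le_one hz.1.le hz.2.le ha).trans_lt hz.2
  exact one_div_pos.2 (sqrt_pos.2 (by linarith))

theorem tendsto_integral_comp_mul_mul {T : ℝ} (hT : 0 < T) {ψ w : ℝ → ℝ}
    (hψ : ContinuousOn ψ (Icc 0 T)) (hw : IntervalIntegrable w volume 0 1) :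
    Tendsto (fun t => ∫ z in (0:ℝ)..1, ψ (t * z) * w z) (𝓝[>] 0)
      (𝓝 (ψ 0 * ∫ z in (0:ℝ)..1, w z)) := by
  have hmaps : ∀ t ∈ Ioc 0 T, ∀ z ∈ Icc (0:ℝ) 1, t * z ∈ Icc 0 T := fun t ht z hz =>
    ⟨mul_nonneg ht.1.le hz.1, (mul_le_of_le_one_right ht.1.le hz.2).trans ht.2⟩
  obtain ⟨C, hC⟩ := isCompact_Icc.exists_bound_of_continuousOn hψ
  rw [← intervalIntegral.integral_const_mul]
  refine intervalIntegral.tendsto_integral_filter_of_dominated_convergence (fun z => C * ‖w z‖)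
    ?_ ?_ (hw.norm.const_mul C) ?_
  · filter_upwards [Ioc_mem_nhdsGT hT] with t ht
    rw [uIoc_of_le zero_le_one]
    have hψt : ContinuousOn (fun z => ψ (t * z)) (Ioc 0 1) :=
      hψ.comp (by fun_prop) fun z hz => hmaps t ht z (Ioc_subset_Icc_self hz)
    exact (hψt.aestronglyMeasurable measurableSet_Ioc).mul hw.aestronglyMeasurable
  · filter_upwards [Ioc_mem_nhdsGT hT] with t ht
    refine ae_of_all _ fun z hz => ?_
    rw [uIoc_of_le zero_le_one] at hz
    rw [norm_mul]
    exact mul_le_mul_of_nonneg_right (hC _ (hmaps t ht z (Ioc_subset_Icc_self hz)))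
      (norm_nonneg _)
  · refine ae_of_all _ fun z hz => ?_
    rw [uIoc_of_le zero_le_one] at hz
    have hmul : Tendsto (fun t => t * z) (𝓝[>] 0) (𝓝[Icc 0 T] 0) := by
      refine tendsto_nhdsWithin_of_tendsto_nhds_of_eventually_within _ ?_ ?_
      · simpa using ((tendsto_id (x := 𝓝 (0:ℝ))).mul_const z).mono_left nhdsWithin_le_nhds
      · filter_upwards [Ioc_mem_nhdsGT hT] with t ht
        exact hmaps t ht z (Ioc_subset_Icc_self hz)
    exact ((hψ 0 ⟨le_rfl, hT.le⟩).tendsto.comp hmul).mul_const _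

theorem stmt_7_general (β T : ℝ) (hβ : 1 ≤ β) (hT : 0 < T)
    (μ₃ : ℝ → ℝ)
    (M : ℝ)
    (hMlim : Tendsto (fun t => μ₃ t / t ^ ((β + 1) / 2)) (nhdsWithin 0 (Set.Ioi 0)) (nhds M))
    (ψ : ℝ → ℝ) (hψc : ContinuousOn ψ (Set.Icc 0 T))
    (hψpos : ∀ t ∈ Set.Icc (0:ℝ) T, 0 < ψ t)
    (H : ℝ → ℝ)
    (hH : ∀ t ∈ Set.Ioc (0:ℝ) T,
      H t = Real.sqrt π * μ₃ t /
        (Real.sqrt (β + 1) * t ^ β *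
          ∫ τ in (0:ℝ)..t, ψ τ / Real.sqrt (t ^ (β + 1) - τ ^ (β + 1))))
    (I₁ : ℝ) (hI₁ : I₁ = ∫ z in (0:ℝ)..1, 1 / Real.sqrt (1 - z ^ (β + 1))) :
    Tendsto H (nhdsWithin 0 (Set.Ioi 0))
      (nhds (Real.sqrt π * M / (Real.sqrt (β + 1) * ψ 0 * I₁))) := by
  have hβ1 : 1 ≤ β + 1 := by linarith
  set A := fun t => ∫ z in (0:ℝ)..1, ψ (t * z) / √(1 - z ^ (β + 1))
  have hA : Tendsto A (𝓝[>] 0) (𝓝 (ψ 0 * I₁)) := by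
    simpa only [hI₁, mul_one_div] using
      tendsto_integral_comp_mul_mul hT hψc (intervalIntegrable_one_div_sqrt_one_sub_rpow hβ1)
  have hHA : ∀ t ∈ Ioc 0 T, H t = √π * (μ₃ t / t ^ ((β + 1) / 2)) / (√(β + 1) * A t) := by
    intro t ht
    have hexp : β + (1 - (β + 1) / 2) = (β + 1) / 2 := by ring
    rw [hH t ht, integral_div_sqrt_rpow_sub_rpow ht.1, mul_assoc (√(β + 1)), ← mul_assoc (t ^ β),
      ← rpow_add ht.1, hexp]
    ring
  have hI₁pos : 0 < I₁ := hI₁ ▸ integral_one_div_sqrt_one_sub_rpow_pos hβ1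
  have hψ0 : 0 < ψ 0 := hψpos 0 ⟨le_rfl, hT.le⟩
  rw [mul_assoc (√(β + 1))]
  refine ((tendsto_const_nhds.mul hMlim).div (tendsto_const_nhds.mul hA) (by positivity)).congr' ?_
  filter_upwards [Ioc_mem_nhdsGT hT] with t ht using (hHA t ht).symm

theorem stmt_7 (β T : ℝ) (hβ : 1 ≤ β) (hT : 0 < T)
    (μ₃ : ℝ → ℝ) (hμ₃c : ContinuousOn μ₃ (Set.Icc 0 T))
    (hμ₃pos : ∀ t ∈ Set.Ioc (0:ℝ) T, 0 < μ₃ t)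
    (M : ℝ) (hM : 0 < M)
    (hMlim : Tendsto (fun t => μ₃ t / t ^ ((β + 1) / 2)) (nhdsWithin 0 (Set.Ioi 0)) (nhds M))
    (ψ : ℝ → ℝ) (hψc : ContinuousOn ψ (Set.Icc 0 T))
    (hψpos : ∀ t ∈ Set.Icc (0:ℝ) T, 0 < ψ t)
    (H : ℝ → ℝ)
    (hH : ∀ t ∈ Set.Ioc (0:ℝ) T,
      H t = Real.sqrt π * μ₃ t /
        (Real.sqrt (β + 1) * t ^ β *
          ∫ τ in (0:ℝ)..t, ψ τ / Real.sqrt (t ^ (β + 1) - τ ^ (β + 1))))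
    (I₁ : ℝ) (hI₁ : I₁ = ∫ z in (0:ℝ)..1, 1 / Real.sqrt (1 - z ^ (β + 1))) :
    Tendsto H (nhdsWithin 0 (Set.Ioi 0))
      (nhds (Real.sqrt π * M / (Real.sqrt (β + 1) * ψ 0 * I₁))) :=
  stmt_7_general β T hβ hT μ₃ M hMlim ψ hψc hψpos H hH I₁ hI₁
end

section
/- Let K : {(t,τ) : 0 ≤ τ ≤ t ≤ T} → ℝ be measurable with |K(t,τ)| ≤ C/√(t − τ) for some constant C > 0 and all 0 ≤ τ < t ≤ T. If a₀ : [0,T] → ℝ is continuous and satisfies a₀(t) = ∫₀ᵗ K(t,τ) a₀(τ) dτ for all t ∈ [0,T], then a₀ ≡ 0 on [0,T]. -/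
/-!
Let `s` be a time up to which `a₀` is known to vanish. For `t ∈ [s, b]` only `τ ∈ [s, t]` contributes
to the integral equation, so `|a₀ t| ≤ 2 C √(b - s) · sup_{[s, b]} |a₀|`. Once `2 C √(b - s) < 1` this
forces `a₀ = 0` on `[s, b]`. The admissible step length `b - s` does not depend on `s`, so finitely many
steps cover `[0, T]`.
-/

open MeasureTheory Set

lemma div_sqrt_eq_mul_rpow (A : ℝ) {x : ℝ} (hx : 0 ≤ x) : A / √x = A * x ^ (-(1 / 2) : ℝ) := by
  rw [Real.rpow_neg hx, ← Real.sqrt_eq_rpow, div_eq_mul_inv]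

lemma intervalIntegrable_div_sqrt (A : ℝ) {u : ℝ} (hu : 0 ≤ u) :
    IntervalIntegrable (fun x => A / √x) volume 0 u :=
  ((intervalIntegral.intervalIntegrable_rpow' (by norm_num)).const_mul A).congr
    fun x hx => (div_sqrt_eq_mul_rpow A (by simp [uIoc_of_le hu] at hx; exact hx.1.le)).symm

lemma integral_div_sqrt (A : ℝ) {u : ℝ} (hu : 0 ≤ u) :
    ∫ x in 0..u, A / √x = 2 * A * √u := by
  rw [intervalIntegral.integral_congr fun x hx => div_sqrt_eq_mul_rpow A
      (by simp [uIcc_of_le hu] at hx; exact hx.1),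
    intervalIntegral.integral_const_mul, integral_rpow (by norm_num), Real.sqrt_eq_rpow]
  norm_num
  ring

lemma abs_intervalIntegral_le_of_abs_le_div_sqrt {f : ℝ → ℝ} {s t A : ℝ} (hst : s ≤ t)
    (hf : ∀ τ ∈ Ioo s t, |f τ| ≤ A / √(t - τ)) :
    |∫ τ in s..t, f τ| ≤ 2 * A * √(t - s) := by
  have hint : IntervalIntegrable (fun τ => A / √(t - τ)) volume s t := by
    simpa using ((intervalIntegrable_div_sqrt A (sub_nonneg.mpr hst)).comp_sub_left t).symm
  calc |∫ τ in s..t, f τ| ≤ ∫ τ in s..t, A / √(t - τ) := by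
        refine intervalIntegral.norm_integral_le_of_norm_le (f := f) hst ?_ hint
        filter_upwards [Measure.ae_ne volume t] with τ hτt hτ
        exact hf τ ⟨hτ.1, lt_of_le_of_ne hτ.2 hτt⟩
    _ = 2 * A * √(t - s) := by
        rw [intervalIntegral.integral_comp_sub_left (fun x => A / √x), sub_self,
          integral_div_sqrt A (sub_nonneg.mpr hst)]

lemma intervalIntegral_eq_of_forall_eq_zero {f : ℝ → ℝ} {a b c : ℝ} (hab : a ≤ b) (hbc : b ≤ c)
    (hf : ∀ x ∈ Ioc a b, f x = 0) : ∫ x in a..c, f x = ∫ x in b..c, f x := by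
  rw [intervalIntegral.integral_of_le (hab.trans hbc), intervalIntegral.integral_of_le hbc]
  exact setIntegral_eq_of_subset_of_forall_sdiff_eq_zero measurableSet_Ioc
    (Ioc_subset_Ioc_left hab) fun x hx => hf x ⟨hx.1.1, not_lt.mp fun h => hx.2 ⟨h, hx.1.2⟩⟩

lemma eqOn_zero_of_forall_norm_le_mul {X E : Type*} [TopologicalSpace X] [NormedAddCommGroup E]
    {a : X → E} {S : Set X} {q : ℝ} (hS : IsCompact S) (ha : ContinuousOn a S) (hq : q < 1)
    (h : ∀ M, (∀ x ∈ S, ‖a x‖ ≤ M) → ∀ x ∈ S, ‖a x‖ ≤ q * M) : EqOn a 0 S := by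
  rcases S.eq_empty_or_nonempty with rfl | hne
  · exact eqOn_empty _ _
  obtain ⟨x₀, hx₀, hmax⟩ := hS.exists_isMaxOn hne ha.norm
  have hM : ‖a x₀‖ ≤ 0 := by
    nlinarith [h _ hmax x₀ hx₀, norm_nonneg (a x₀)]
  intro x hx
  exact norm_le_zero_iff.mp ((hmax hx).trans hM)

namespace Volterra

variable {T C : ℝ} {K : ℝ → ℝ → ℝ} {a : ℝ → ℝ}

lemma abs_le_mul_sqrt_of_eqOn_zero
    (hKbound : ∀ t τ : ℝ, 0 ≤ τ → τ < t → t ≤ T → |K t τ| ≤ C / √(t - τ))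
    (heq : ∀ t ∈ Icc (0 : ℝ) T, a t = ∫ τ in (0 : ℝ)..t, K t τ * a τ)
    {s t M : ℝ} (hs : 0 ≤ s) (hst : s ≤ t) (htT : t ≤ T) (hzero : EqOn a 0 (Icc 0 s))
    (hM : ∀ τ ∈ Icc s t, |a τ| ≤ M) :
    |a t| ≤ 2 * (C * M) * √(t - s) := by
  rw [heq t ⟨hs.trans hst, htT⟩, intervalIntegral_eq_of_forall_eq_zero hs hst
    fun τ hτ => by simp [hzero ⟨hτ.1.le, hτ.2⟩]]
  refine abs_intervalIntegral_le_of_abs_le_div_sqrt hst fun τ hτ => ?_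
  have hK := hKbound t τ (hs.trans hτ.1.le) hτ.2 htT
  calc |K t τ * a τ| = |K t τ| * |a τ| := abs_mul _ _
    _ ≤ C / √(t - τ) * M := mul_le_mul hK (hM τ ⟨hτ.1.le, hτ.2.le⟩) (abs_nonneg _)
        ((abs_nonneg _).trans hK)
    _ = C * M / √(t - τ) := div_mul_eq_mul_div _ _ _

lemma eqOn_zero_Icc_of_eqOn_zero_Icc (ha : ContinuousOn a (Icc 0 T))
    (hKbound : ∀ t τ : ℝ, 0 ≤ τ → τ < t → t ≤ T → |K t τ| ≤ C / √(t - τ))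
    (heq : ∀ t ∈ Icc (0 : ℝ) T, a t = ∫ τ in (0 : ℝ)..t, K t τ * a τ) (hC : 0 ≤ C)
    {s b : ℝ} (hs : 0 ≤ s) (hsb : s ≤ b) (hbT : b ≤ T) (hsmall : 2 * C * √(b - s) < 1)
    (hzero : EqOn a 0 (Icc 0 s)) : EqOn a 0 (Icc 0 b) := by
  have hsb' : EqOn a 0 (Icc s b) := by
    refine eqOn_zero_of_forall_norm_le_mul isCompact_Icc (ha.mono (Icc_subset_Icc hs hbT)) hsmall
      fun M hM t ht => ?_
    simp only [Real.norm_eq_abs] at hM ⊢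
    have hM0 : 0 ≤ M := (abs_nonneg _).trans (hM t ht)
    calc |a t| ≤ 2 * (C * M) * √(t - s) := abs_le_mul_sqrt_of_eqOn_zero hKbound heq hs ht.1
          (ht.2.trans hbT) hzero fun τ hτ => hM τ ⟨hτ.1, hτ.2.trans ht.2⟩
      _ ≤ 2 * (C * M) * √(b - s) := by gcongr; exact ht.2
      _ = 2 * C * √(b - s) * M := by ring
  rw [← Icc_union_Icc_eq_Icc hs hsb]
  exact hzero.union hsb'

end Volterra

theorem stmt_10_general (T C : ℝ) (hT : 0 < T) (hC : 0 < C)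
    (K : ℝ → ℝ → ℝ)
    (hKbound : ∀ t τ : ℝ, 0 ≤ τ → τ < t → t ≤ T → |K t τ| ≤ C / Real.sqrt (t - τ))
    (a₀ : ℝ → ℝ) (ha₀ : ContinuousOn a₀ (Set.Icc 0 T))
    (heq : ∀ t ∈ Set.Icc (0:ℝ) T, a₀ t = ∫ τ in (0:ℝ)..t, K t τ * a₀ τ) :
    ∀ t ∈ Set.Icc (0:ℝ) T, a₀ t = 0 := by
  set δ := (4 * C)⁻¹ ^ 2
  have hδ : 0 < δ := by positivity
  have hstep : ∀ s b, 0 ≤ s → s ≤ b → b ≤ T → b ≤ s + δ →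
      EqOn a₀ 0 (Icc 0 s) → EqOn a₀ 0 (Icc 0 b) := fun s b hs hsb hbT hbδ =>
    Volterra.eqOn_zero_Icc_of_eqOn_zero_Icc ha₀ hKbound heq hC.le hs hsb hbT <|
      calc 2 * C * √(b - s) ≤ 2 * C * √δ := by gcongr; linarith
        _ = 1 / 2 := by rw [Real.sqrt_sq (by positivity)]; field_simp; ring
        _ < 1 := by norm_num
  have h0 : a₀ 0 = 0 := by simpa using heq 0 ⟨le_rfl, hT.le⟩
  have hgrow : ∀ n : ℕ, EqOn a₀ 0 (Icc 0 (min (n * δ) T)) := by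
    intro n
    induction n with
    | zero => simpa [hT.le] using h0
    | succ n ih =>
      refine hstep _ _ (by positivity) (by gcongr; linarith) (min_le_right _ _) ?_ ih
      rw [← min_add_add_right]
      push_cast
      exact min_le_min (by linarith) (by linarith)
  obtain ⟨n, hn⟩ := exists_nat_ge (T / δ)
  rw [← min_eq_right ((div_le_iff₀ hδ).mp hn)]
  exact hgrow n

theorem stmt_10 (T C : ℝ) (hT : 0 < T) (hC : 0 < C)
    (K : ℝ → ℝ → ℝ) (hKmeas : Measurable (Function.uncurry K))
    (hKbound : ∀ t τ : ℝ, 0 ≤ τ → τ < t → t ≤ T → |K t τ| ≤ C / Real.sqrt (t - τ))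
    (a₀ : ℝ → ℝ) (ha₀ : ContinuousOn a₀ (Set.Icc 0 T))
    (heq : ∀ t ∈ Set.Icc (0:ℝ) T, a₀ t = ∫ τ in (0:ℝ)..t, K t τ * a₀ τ) :
    ∀ t ∈ Set.Icc (0:ℝ) T, a₀ t = 0 :=
  stmt_10_general T C hT hC K hKbound a₀ ha₀ heq
end

section
/- Let β ≥ 1, 0 < A₀, and let a : [0,T] → ℝ be continuous with a(t) ≥ A₀ t^β, θ(t) = ∫₀ᵗ a. Then for 0 < t* ≤ t₁ < t₂ ≤ T: ∫_{t₁}^{t₂} dτ/√(θ(t₂) − θ(τ)) ≤ √((β+1)/(A₀ t₂^β)) · 2√(t₂ − t₁). -/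
open MeasureTheory Set

theorem stmt_19 (T β A₀ tstar : ℝ) (hT : 0 < T) (hβ : 1 ≤ β) (hA₀ : 0 < A₀)
    (htstar : 0 < tstar)
    (a : ℝ → ℝ) (ha : ContinuousOn a (Set.Icc 0 T))
    (hlb : ∀ t ∈ Set.Icc (0:ℝ) T, A₀ * t ^ β ≤ a t)
    (θ : ℝ → ℝ) (hθ : ∀ t, θ t = ∫ σ in (0:ℝ)..t, a σ) :
    ∀ t₁ t₂ : ℝ, tstar ≤ t₁ → t₁ < t₂ → t₂ ≤ T →
      ∫ τ in t₁..t₂, 1 / Real.sqrt (θ t₂ - θ τ) ≤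
        Real.sqrt ((β + 1) / (A₀ * t₂ ^ β)) * (2 * Real.sqrt (t₂ - t₁)) := by
  intro t₁ t₂ ht1 h12 h2T
  have ht₁pos : 0 < t₁ := lt_of_lt_of_le htstar ht1
  have ht₂pos : 0 < t₂ := ht₁pos.trans h12
  have hβ1 : (0:ℝ) < β + 1 := by linarith
  have ht₂β : (0:ℝ) < t₂ ^ β := Real.rpow_pos_of_pos ht₂pos β
  set D : ℝ := A₀ * t₂ ^ β / (β + 1) with hDdef
  have hD : 0 < D := by positivity
  set C : ℝ := Real.sqrt ((β + 1) / (A₀ * t₂ ^ β)) with hCdef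
  have hC : C = 1 / Real.sqrt D := by
    rw [hCdef, hDdef, one_div, ← Real.sqrt_inv]
    congr 1
    field_simp
  -- integrability of a on subintervals
  have haI : IntegrableOn a (Icc 0 T) volume := ha.integrableOn_Icc
  have ha_int : ∀ u v : ℝ, u ∈ Icc (0:ℝ) T → v ∈ Icc (0:ℝ) T →
      IntervalIntegrable a volume u v := by
    intro u v hu hv
    exact (haI.mono_set (uIcc_subset_Icc hu hv)).intervalIntegrable
  have ht₂mem : t₂ ∈ Icc (0:ℝ) T := ⟨ht₂pos.le, h2T⟩
  have h0mem : (0:ℝ) ∈ Icc (0:ℝ) T := ⟨le_rfl, hT.le⟩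
  -- key lower bound on θ t₂ - θ τ
  have hkey : ∀ τ ∈ Icc t₁ t₂, D * (t₂ - τ) ≤ θ t₂ - θ τ := by
    intro τ ⟨hτ1, hτ2⟩
    have hτpos : 0 < τ := ht₁pos.trans_le hτ1
    have hτmem : τ ∈ Icc (0:ℝ) T := ⟨hτpos.le, hτ2.trans h2T⟩
    rw [hθ, hθ]
    rw [intervalIntegral.integral_interval_sub_left (ha_int 0 t₂ h0mem ht₂mem)
      (ha_int 0 τ h0mem hτmem)]
    have hint_rpow : IntervalIntegrable (fun σ : ℝ => A₀ * σ ^ β) volume τ t₂ :=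
      (intervalIntegral.intervalIntegrable_rpow' (by linarith)).const_mul A₀
    have h1 : ∫ σ in τ..t₂, A₀ * σ ^ β ≤ ∫ σ in τ..t₂, a σ := by
      apply intervalIntegral.integral_mono_on hτ2 hint_rpow
        (ha_int τ t₂ hτmem ht₂mem)
      intro x hx
      exact hlb x ⟨hτpos.le.trans hx.1, hx.2.trans h2T⟩
    have h2 : ∫ σ in τ..t₂, A₀ * σ ^ β = A₀ * ((t₂ ^ (β + 1) - τ ^ (β + 1)) / (β + 1)) := by
      rw [intervalIntegral.integral_const_mul, integral_rpow (Or.inl (by linarith))]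
    have h3 : τ ^ β ≤ t₂ ^ β := Real.rpow_le_rpow hτpos.le hτ2 (by linarith)
    have h4 : t₂ ^ (β + 1) = t₂ ^ β * t₂ := Real.rpow_add_one ht₂pos.ne' β
    have h5 : τ ^ (β + 1) = τ ^ β * τ := Real.rpow_add_one hτpos.ne' β
    have h6 : D * (t₂ - τ) ≤ A₀ * ((t₂ ^ (β + 1) - τ ^ (β + 1)) / (β + 1)) := by
      have hτβ : (0:ℝ) ≤ τ ^ β := (Real.rpow_pos_of_pos hτpos β).le
      have key : t₂ ^ β * (t₂ - τ) ≤ t₂ ^ β * t₂ - τ ^ β * τ := by nlinarith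
      calc D * (t₂ - τ) = A₀ * (t₂ ^ β * (t₂ - τ)) / (β + 1) := by rw [hDdef]; ring
        _ ≤ A₀ * (t₂ ^ β * t₂ - τ ^ β * τ) / (β + 1) := by gcongr
        _ = A₀ * ((t₂ ^ (β + 1) - τ ^ (β + 1)) / (β + 1)) := by rw [h4, h5]; ring
    linarith
  -- continuity of θ on [0, T]
  have hθcont : ContinuousOn θ (Icc 0 T) := by
    have := intervalIntegral.continuousOn_primitive_interval
      (f := a) (a := (0:ℝ)) (b := T) (μ := volume)
      (by rwa [uIcc_of_le hT.le])
    rw [uIcc_of_le hT.le] at this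
    exact this.congr fun t _ => hθ t
  -- integrability of the comparison function
  have hrpow_eq : ∀ τ ∈ Ioc t₁ t₂, (t₂ - τ) ^ (-(1/2) : ℝ) = 1 / Real.sqrt (t₂ - τ) := by
    intro τ hτ
    have h : (0:ℝ) ≤ t₂ - τ := by linarith [hτ.2]
    rw [Real.rpow_neg h, Real.sqrt_eq_rpow]
    exact (one_div _).symm
  have hg0_int : IntervalIntegrable (fun τ => 1 / Real.sqrt (t₂ - τ)) volume t₁ t₂ := by
    have h := (intervalIntegral.intervalIntegrable_rpow'
      (a := t₂ - t₁) (b := 0) (r := -(1/2)) (by norm_num)).comp_sub_left t₂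
    simp only [sub_sub_cancel, sub_zero] at h
    rw [intervalIntegrable_iff_integrableOn_Ioc_of_le h12.le] at h ⊢
    exact h.congr_fun hrpow_eq measurableSet_Ioc
  have hg_int : IntervalIntegrable (fun τ => C * (1 / Real.sqrt (t₂ - τ))) volume t₁ t₂ :=
    hg0_int.const_mul C
  -- pointwise bound
  have hpt : ∀ τ ∈ Icc t₁ t₂,
      1 / Real.sqrt (θ t₂ - θ τ) ≤ C * (1 / Real.sqrt (t₂ - τ)) := by
    intro τ hτ
    rcases eq_or_lt_of_le hτ.2 with heq | hlt
    · subst heq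
      simp [sub_self]
    · have hkeyτ := hkey τ hτ
      have hDt : 0 < D * (t₂ - τ) := mul_pos hD (by linarith)
      have hs1 : Real.sqrt (D * (t₂ - τ)) ≤ Real.sqrt (θ t₂ - θ τ) :=
        Real.sqrt_le_sqrt hkeyτ
      have hs2 : 0 < Real.sqrt (D * (t₂ - τ)) := Real.sqrt_pos.mpr hDt
      calc 1 / Real.sqrt (θ t₂ - θ τ) ≤ 1 / Real.sqrt (D * (t₂ - τ)) :=
            one_div_le_one_div_of_le hs2 hs1
        _ = C * (1 / Real.sqrt (t₂ - τ)) := by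
            rw [Real.sqrt_mul hD.le, hC, one_div_mul_one_div]
  -- integrability of LHS
  have hf_int : IntervalIntegrable (fun τ => 1 / Real.sqrt (θ t₂ - θ τ)) volume t₁ t₂ := by
    rw [intervalIntegrable_iff_integrableOn_Ioc_of_le h12.le]
    rw [intervalIntegrable_iff_integrableOn_Ioc_of_le h12.le] at hg_int
    apply MeasureTheory.Integrable.mono hg_int
    · -- AEStronglyMeasurable
      have hsub : Icc t₁ t₂ ⊆ Icc 0 T := Icc_subset_Icc ht₁pos.le h2T
      have hθm : AEMeasurable θ (volume.restrict (Ioc t₁ t₂)) := by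
        have : ContinuousOn θ (Ioc t₁ t₂) :=
          (hθcont.mono (Ioc_subset_Icc_self.trans hsub))
        exact this.aemeasurable measurableSet_Ioc
      have hmeas : Measurable fun x : ℝ => 1 / Real.sqrt (θ t₂ - x) := by
        apply Measurable.div measurable_const
        exact Real.continuous_sqrt.measurable.comp (measurable_const.sub measurable_id)
      exact (hmeas.comp_aemeasurable hθm).aestronglyMeasurable
    · -- a.e. bound
      rw [ae_restrict_iff' measurableSet_Ioc]
      filter_upwards with τ hτ
      have h1 := hpt τ (Ioc_subset_Icc_self hτ)
      have h2 : (0:ℝ) ≤ 1 / Real.sqrt (θ t₂ - θ τ) := by positivity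
      have h3 : (0:ℝ) ≤ C * (1 / Real.sqrt (t₂ - τ)) := h2.trans h1
      rw [Real.norm_eq_abs, Real.norm_eq_abs, abs_of_nonneg h2, abs_of_nonneg h3]
      exact h1
  -- compute the RHS integral
  have hval : ∫ τ in t₁..t₂, 1 / Real.sqrt (t₂ - τ) = 2 * Real.sqrt (t₂ - t₁) := by
    have heq : ∫ τ in t₁..t₂, 1 / Real.sqrt (t₂ - τ)
        = ∫ τ in t₁..t₂, (t₂ - τ) ^ (-(1/2) : ℝ) := by
      apply intervalIntegral.integral_congr
      intro τ hτ
      rw [uIcc_of_le h12.le] at hτ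
      have h : (0:ℝ) ≤ t₂ - τ := by linarith [hτ.2]
      show 1 / Real.sqrt (t₂ - τ) = (t₂ - τ) ^ (-(1/2) : ℝ)
      rw [Real.rpow_neg h, Real.sqrt_eq_rpow, one_div]
    rw [heq, intervalIntegral.integral_comp_sub_left (fun x => x ^ (-(1/2):ℝ)) t₂,
      sub_self, integral_rpow (Or.inl (by norm_num))]
    norm_num
    rw [Real.sqrt_eq_rpow, div_eq_iff (by norm_num : (1/2:ℝ) ≠ 0)]
    ring
  calc ∫ τ in t₁..t₂, 1 / Real.sqrt (θ t₂ - θ τ)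
      ≤ ∫ τ in t₁..t₂, C * (1 / Real.sqrt (t₂ - τ)) :=
        intervalIntegral.integral_mono_on h12.le hf_int hg_int hpt
    _ = C * ∫ τ in t₁..t₂, 1 / Real.sqrt (t₂ - τ) :=
        intervalIntegral.integral_const_mul C _
    _ = C * (2 * Real.sqrt (t₂ - t₁)) := by rw [hval]
end
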